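/- Let φ ∈ A(𝔻) be a symbol mapping 𝔻̄ into 𝔻̄ whose iterates φ^n converge to a point z₀ ∈ ∂𝔻 uniformly on the compact subsets of 𝔻 (φ has a boundary Denjoy–Wolff point). Then the composition operator C_φ : A(𝔻) → A(𝔻) is not uniformly mean ergodic. -/

import Mathlib

open Metric Set Filter Complex
open scoped Topology Classical

noncomputable section

/-- Membership in the disc algebra `A(𝔻)`: continuous on the closed unit disc and
holomorphic on the open unit disc. -/
def IsDiscAlg (f : ℂ → ℂ) : Prop :=
  ContinuousOn f (closedBall (0:ℂ) 1) ∧ DifferentiableOn ℂ f (ball (0:ℂ) 1)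

/-- Membership in `H^∞(𝔻)`: bounded and holomorphic on the open unit disc. -/
def IsHInf (f : ℂ → ℂ) : Prop :=
  DifferentiableOn ℂ f (ball (0:ℂ) 1) ∧ ∃ M : ℝ, ∀ z ∈ ball (0:ℂ) 1, ‖f z‖ ≤ M

/-- The Cesàro means `(C_φ)_[n] f = (1/n) ∑_{m=1}^n f ∘ φ^m` of the composition
operator `C_φ f = f ∘ φ`. -/
def cesaro (φ f : ℂ → ℂ) (n : ℕ) (z : ℂ) : ℂ :=
  (n : ℂ)⁻¹ * ∑ m ∈ Finset.Icc 1 n, f (φ^[m] z)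

/-- `C_φ` is mean ergodic on `A(𝔻)`: for each `f ∈ A(𝔻)` the Cesàro means converge
in the sup norm on the closed disc. -/
def MeanErgodicDiscAlg (φ : ℂ → ℂ) : Prop :=
  ∀ f : ℂ → ℂ, IsDiscAlg f →
    ∃ g : ℂ → ℂ, TendstoUniformlyOn (cesaro φ f) g atTop (closedBall (0:ℂ) 1)

/-- `C_φ` is uniformly mean ergodic on `A(𝔻)`: the Cesàro means converge in operator
norm, i.e. uniformly over the unit ball of `A(𝔻)`. -/
def UnifMeanErgodicDiscAlg (φ : ℂ → ℂ) : Prop :=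
  ∃ P : (ℂ → ℂ) → ℂ → ℂ, ∀ ε > (0:ℝ), ∃ N : ℕ, ∀ n ≥ N,
    ∀ f : ℂ → ℂ, IsDiscAlg f → (∀ z ∈ closedBall (0:ℂ) 1, ‖f z‖ ≤ 1) →
      ∀ z ∈ closedBall (0:ℂ) 1, ‖cesaro φ f n z - P f z‖ ≤ ε

/-- `C_φ` is mean ergodic on `H^∞(𝔻)`: for each `f ∈ H^∞(𝔻)` the Cesàro means converge
in the sup norm on the open disc. -/
def MeanErgodicHInf (φ : ℂ → ℂ) : Prop :=
  ∀ f : ℂ → ℂ, IsHInf f →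
    ∃ g : ℂ → ℂ, TendstoUniformlyOn (cesaro φ f) g atTop (ball (0:ℂ) 1)

/-- `C_φ` is uniformly mean ergodic on `H^∞(𝔻)`: the Cesàro means converge in operator
norm, i.e. uniformly over the unit ball of `H^∞(𝔻)`. -/
def UnifMeanErgodicHInf (φ : ℂ → ℂ) : Prop :=
  ∃ P : (ℂ → ℂ) → ℂ → ℂ, ∀ ε > (0:ℝ), ∃ N : ℕ, ∀ n ≥ N,
    ∀ f : ℂ → ℂ, IsHInf f → (∀ z ∈ ball (0:ℂ) 1, ‖f z‖ ≤ 1) →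
      ∀ z ∈ ball (0:ℂ) 1, ‖cesaro φ f n z - P f z‖ ≤ ε

/-- `φ` is an automorphism (biholomorphic self-map) of the open unit disc. -/
def IsDiscAutomorphism (φ : ℂ → ℂ) : Prop :=
  DifferentiableOn ℂ φ (ball (0:ℂ) 1) ∧ MapsTo φ (ball (0:ℂ) 1) (ball (0:ℂ) 1) ∧
  ∃ ψ : ℂ → ℂ, DifferentiableOn ℂ ψ (ball (0:ℂ) 1) ∧
    MapsTo ψ (ball (0:ℂ) 1) (ball (0:ℂ) 1) ∧
    (∀ z ∈ ball (0:ℂ) 1, ψ (φ z) = z) ∧ ∀ z ∈ ball (0:ℂ) 1, φ (ψ z) = z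

/-- An elliptic automorphism of the disc: an automorphism with a fixed point in `𝔻`. -/
def IsEllipticAutomorphism (φ : ℂ → ℂ) : Prop :=
  IsDiscAutomorphism φ ∧ ∃ z ∈ ball (0:ℂ) 1, φ z = z

/-- A hyperbolic automorphism of the disc: an automorphism with exactly two fixed
points, both on the unit circle. -/
def IsHyperbolicAutomorphism (φ : ℂ → ℂ) : Prop :=
  IsDiscAutomorphism φ ∧ ∃ p q : ℂ, p ≠ q ∧ ‖p‖ = 1 ∧ ‖q‖ = 1 ∧ φ p = p ∧ φ q = q ∧
    ∀ z ∈ closedBall (0:ℂ) 1, φ z = z → z = p ∨ z = q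

/-- A parabolic automorphism of the disc: an automorphism with exactly one fixed
point, lying on the unit circle. -/
def IsParabolicAutomorphism (φ : ℂ → ℂ) : Prop :=
  IsDiscAutomorphism φ ∧ ∃ p : ℂ, ‖p‖ = 1 ∧ φ p = p ∧
    ∀ z ∈ closedBall (0:ℂ) 1, φ z = z → z = p

/-- A set `J ⊆ ℕ` has density one: `#(J ∩ [0,N]) / N → 1` as `N → ∞`. -/
def HasDensityOne (J : Set ℕ) : Prop :=
  Tendsto (fun N : ℕ => (((Finset.range (N + 1)).filter (fun n => n ∈ J)).card : ℝ) / N)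
    atTop (𝓝 1)

/-- A typical weight on `𝔻`: continuous, strictly positive, bounded, radial,
non-increasing in `|z|`, and tending to `0` as `|z| → 1`. -/
def IsTypicalWeight (v : ℂ → ℝ) : Prop :=
  ContinuousOn v (ball (0:ℂ) 1) ∧ (∀ z ∈ ball (0:ℂ) 1, 0 < v z) ∧
  (∃ M : ℝ, ∀ z ∈ ball (0:ℂ) 1, v z ≤ M) ∧
  (∀ z ∈ ball (0:ℂ) 1, ∀ w ∈ ball (0:ℂ) 1, ‖z‖ = ‖w‖ → v z = v w) ∧
  (∀ z ∈ ball (0:ℂ) 1, ∀ w ∈ ball (0:ℂ) 1, ‖z‖ ≤ ‖w‖ → v w ≤ v z) ∧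
  (∀ ε > (0:ℝ), ∃ r : ℝ, r < 1 ∧ ∀ z ∈ ball (0:ℂ) 1, r ≤ ‖z‖ → v z < ε)

/-- Membership in the weighted space `H_v^∞`. -/
def IsHvInf (v : ℂ → ℝ) (f : ℂ → ℂ) : Prop :=
  DifferentiableOn ℂ f (ball (0:ℂ) 1) ∧ ∃ M : ℝ, ∀ z ∈ ball (0:ℂ) 1, v z * ‖f z‖ ≤ M

/-- Membership in the weighted space `H_v^0`. -/
def IsHv0 (v : ℂ → ℝ) (f : ℂ → ℂ) : Prop :=
  IsHvInf v f ∧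
  ∀ ε > (0:ℝ), ∃ r : ℝ, r < 1 ∧ ∀ z ∈ ball (0:ℂ) 1, r ≤ ‖z‖ → v z * ‖f z‖ < ε

open ComplexConjugate

/-! Evaluate at `0`. The orbit `φ^[m] 0` stays in `𝔻` and tends to `z₀`, so for every `f` continuous
on `𝔻̄` the Cesàro means `(C_φ)_[n] f (0)` tend to `f z₀`; hence a uniform limit `P` of the means
must satisfy `P f 0 = f z₀`. The peak functions `(z̄₀ z)^k` have norm `1` and equal `1` at `z₀`, but
for a fixed `n` the finitely many points `φ^[m] 0`, `1 ≤ m ≤ n`, lie strictly inside `𝔻`, so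
`(C_φ)_[n] (z̄₀ z)^k (0)` becomes small as `k → ∞`: the means cannot be uniformly close to `P`. -/

theorem norm_cesaro_le {φ f : ℂ → ℂ} {n : ℕ} {z : ℂ} {c : ℝ} (hc : 0 ≤ c)
    (hf : ∀ m ∈ Finset.Icc 1 n, ‖f (φ^[m] z)‖ ≤ c) : ‖cesaro φ f n z‖ ≤ c := by
  rcases Nat.eq_zero_or_pos n with rfl | hn
  · simpa [cesaro] using hc
  have hsum : ‖∑ m ∈ Finset.Icc 1 n, f (φ^[m] z)‖ ≤ n * c := by
    simpa using norm_sum_le_of_le _ hf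
  rw [cesaro, norm_mul, norm_inv, Complex.norm_natCast, inv_mul_le_iff₀ (by exact_mod_cast hn)]
  exact hsum

theorem tendsto_cesaro_of_tendsto_iterate {φ f : ℂ → ℂ} {s : Set ℂ} {z z₀ : ℂ}
    (hf : ContinuousWithinAt f s z₀) (horb : Tendsto (fun m => φ^[m] z) atTop (𝓝[s] z₀)) :
    Tendsto (fun n => cesaro φ f n z) atTop (𝓝 (f z₀)) := by
  have hshift : Tendsto (fun i => f (φ^[i + 1] z)) atTop (𝓝 (f z₀)) :=
    (hf.tendsto.comp horb).comp (tendsto_add_atTop_nat 1)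
  refine hshift.cesaro_smul.congr fun n => ?_
  rw [cesaro, ← Finset.Ico_add_one_right_eq_Icc, Finset.sum_Ico_eq_sum_range, Complex.real_smul]
  simp only [add_comm 1]
  push_cast
  ring

theorem eventually_forall_norm_pow_le {ι E : Type*} [SeminormedAddCommGroup E] {s : Finset ι}
    {x : ι → E} (hx : ∀ i ∈ s, ‖x i‖ < 1) {ε : ℝ} (hε : 0 < ε) :
    ∀ᶠ k in atTop, ∀ i ∈ s, ‖x i‖ ^ k ≤ ε :=
  (Finset.eventually_all _).2 fun i hi =>
    (tendsto_pow_atTop_nhds_zero_of_lt_one (norm_nonneg _) (hx i hi)).eventually (ge_mem_nhds hε)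

def peakMonomial (z₀ : ℂ) (k : ℕ) (z : ℂ) : ℂ := (conj z₀ * z) ^ k

theorem isDiscAlg_peakMonomial (z₀ : ℂ) (k : ℕ) : IsDiscAlg (peakMonomial z₀ k) :=
  ⟨(continuous_const.mul continuous_id).pow k |>.continuousOn,
    (differentiable_id.const_mul _).pow k |>.differentiableOn⟩

theorem norm_peakMonomial {z₀ : ℂ} (hz₀ : ‖z₀‖ = 1) (k : ℕ) (z : ℂ) :
    ‖peakMonomial z₀ k z‖ = ‖z‖ ^ k := by
  rw [peakMonomial, norm_pow, norm_mul, RCLike.norm_conj, hz₀, one_mul]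

theorem peakMonomial_self {z₀ : ℂ} (hz₀ : ‖z₀‖ = 1) (k : ℕ) : peakMonomial z₀ k z₀ = 1 := by
  rw [peakMonomial, mul_comm, Complex.mul_conj, Complex.normSq_eq_norm_sq, hz₀]
  norm_num

theorem norm_peakMonomial_le_one {z₀ z : ℂ} (hz₀ : ‖z₀‖ = 1) (k : ℕ)
    (hz : z ∈ closedBall (0:ℂ) 1) : ‖peakMonomial z₀ k z‖ ≤ 1 := by
  rw [norm_peakMonomial hz₀]
  exact pow_le_one₀ (norm_nonneg _) (mem_closedBall_zero_iff.1 hz)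

theorem stmt_10_general (φ : ℂ → ℂ)
    (hφb : MapsTo φ (ball (0:ℂ) 1) (ball (0:ℂ) 1))
    (z₀ : ℂ) (hz₀ : ‖z₀‖ = 1)
    (hDW : TendstoLocallyUniformlyOn (fun (n : ℕ) (z : ℂ) => φ^[n] z) (fun _ => z₀)
      atTop (ball (0:ℂ) 1)) :
    ¬ UnifMeanErgodicDiscAlg φ := by
  rintro ⟨P, hP⟩
  have horbit : ∀ m, φ^[m] 0 ∈ ball (0:ℂ) 1 := fun m => hφb.iterate m (mem_ball_self one_pos)
  have horbit_tendsto : Tendsto (fun m => φ^[m] 0) atTop (𝓝[closedBall 0 1] z₀) :=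
    tendsto_nhdsWithin_iff.2 ⟨hDW.tendsto_at (mem_ball_self one_pos),
      Eventually.of_forall fun m => ball_subset_closedBall (horbit m)⟩
  obtain ⟨N, hN⟩ := hP (1/4) (by norm_num)
  obtain ⟨k, hk⟩ : ∃ k, ∀ m ∈ Finset.Icc 1 N, ‖φ^[m] 0‖ ^ k ≤ 1/2 :=
    (eventually_forall_norm_pow_le (fun m _ => mem_ball_zero_iff.1 (horbit m))
      (by norm_num)).exists
  set f := peakMonomial z₀ k
  have hf_le : ∀ z ∈ closedBall (0:ℂ) 1, ‖f z‖ ≤ 1 := fun _ => norm_peakMonomial_le_one hz₀ k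
  have hP_tendsto : Tendsto (fun n => cesaro φ f n 0) atTop (𝓝 (P f 0)) :=
    (atTop_basis.tendsto_iff nhds_basis_closedBall).2 fun ε hε => let ⟨N, hN⟩ := hP ε hε
      ⟨N, trivial, fun n hn => mem_closedBall_iff_norm.2 <|
        hN n hn f (isDiscAlg_peakMonomial z₀ k) hf_le 0 (by simp)⟩
  have hPf : P f 0 = 1 := by
    rw [← peakMonomial_self hz₀ k]
    exact tendsto_nhds_unique hP_tendsto <| tendsto_cesaro_of_tendsto_iterate
      ((isDiscAlg_peakMonomial z₀ k).1.continuousWithinAt (by simp [hz₀])) horbit_tendsto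
  have hsmall : ‖cesaro φ f N 0‖ ≤ 1/2 :=
    norm_cesaro_le (by norm_num) fun m hm => (norm_peakMonomial hz₀ k _).trans_le (hk m hm)
  have hclose := hN N le_rfl f (isDiscAlg_peakMonomial z₀ k) hf_le 0 (by simp)
  rw [hPf] at hclose
  have htri := norm_le_norm_add_norm_sub (cesaro φ f N 0) 1
  rw [norm_one] at htri
  linarith

/-- **Boundary Denjoy–Wolff point: never uniformly mean ergodic on `A(𝔻)`.** Let
`φ ∈ A(𝔻)` map `𝔻̄` into `𝔻̄` and suppose its iterates converge, uniformly on compact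
subsets of `𝔻`, to a point `z₀ ∈ ∂𝔻`. Then `C_φ : A(𝔻) → A(𝔻)` is not uniformly mean
ergodic. -/
theorem stmt_10 (φ : ℂ → ℂ) (hφa : IsDiscAlg φ)
    (hφm : MapsTo φ (closedBall (0:ℂ) 1) (closedBall (0:ℂ) 1))
    (hφb : MapsTo φ (ball (0:ℂ) 1) (ball (0:ℂ) 1))
    (z₀ : ℂ) (hz₀ : ‖z₀‖ = 1)
    (hDW : TendstoLocallyUniformlyOn (fun (n : ℕ) (z : ℂ) => φ^[n] z) (fun _ => z₀)
      atTop (ball (0:ℂ) 1)) :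
    ¬ UnifMeanErgodicDiscAlg φ :=
  stmt_10_general φ hφb z₀ hz₀ hDW
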